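/- Let 0 < α < 1 and let the discrete convolution kernels A^{(n)}_{n−k} be positive, monotone (A^{(n)}_{n−k−1} ≥ A^{(n)}_{n−k} > 0), and satisfy the lower bound A^{(n)}_{n−k} ≥ (1/π_a)·(1/τ_k) ∫_{t_{k−1}}^{t_k} ω_{1−α}(t_n − s) ds for some constant π_a > 0 and all 1 ≤ k ≤ n ≤ N. Let p^{(n)}_{n−j} be the associated complementary kernels. Then for m = 0 and m = 1 and for every 1 ≤ n ≤ N, Σ_{j=1}^{n} p^{(n)}_{n−j} ω_{1+mα−α}(t_j) ≤ π_a ω_{1+mα}(t_n). -/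

import Mathlib

/-!
STATEMENT 12: weighted bound for the complementary kernels,
`Σ_{j=1}^n p^{(n)}_{n−j} ω_{1+mα−α}(t_j) ≤ π_a ω_{1+mα}(t_n)` for `m = 0, 1`.
Throughout, `A n k` denotes the kernel `A^{(n)}_{n−k}` (the coefficient of
the step `k`).
-/

open Real MeasureTheory

/-- `ω_μ(s) := s^{μ−1}/Γ(μ)`. -/
noncomputable def omega (μ s : ℝ) : ℝ := s ^ (μ - 1) / Real.Gamma μ

/-- The nonuniform L1 kernel `a^{(n)}_{n−k}` (step-indexed). -/
noncomputable def L1kernel (α : ℝ) (t : ℕ → ℝ) (n k : ℕ) : ℝ :=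
  (1 / (t k - t (k - 1))) * ∫ s in (t (k - 1))..(t k), omega (1 - α) (t n - s)

/-- The discrete complementary convolution kernels `p^{(n)}_m` associated with
a family of kernels.  Here `A n k` denotes the kernel `A^{(n)}_{n−k}`
(the coefficient of the step `k` in `Σ_{k=1}^n A^{(n)}_{n−k} ∇v^k`), and
`compP A n m = p^{(n)}_m`, defined by `p^{(n)}_0 := 1/A^{(n)}_0` and, for
`j = n − (m+1)`,
`p^{(n)}_{n−j} := (1/A^{(j)}_0) Σ_{k=j+1}^n (A^{(k)}_{k−j−1} − A^{(k)}_{k−j}) p^{(n)}_{n−k}`;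
note `A^{(j)}_0 = A j j`, `A^{(k)}_{k−j} = A k j` and `A^{(k)}_{k−j−1} = A k (j+1)`. -/
noncomputable def compP (A : ℕ → ℕ → ℝ) (n : ℕ) : ℕ → ℝ
  | 0 => 1 / A n n
  | (m + 1) =>
      (1 / A (n - (m + 1)) (n - (m + 1))) *
        ∑ k ∈ (Finset.Icc (n - (m + 1) + 1) n).attach,
          (A k.1 (n - (m + 1) + 1) - A k.1 (n - (m + 1))) * compP A n (n - k.1)
  decreasing_by
    have hk := Finset.mem_Icc.mp k.2
    omega

/-!
The complementary kernels are nonnegative (by monotonicity of the kernels) and satisfy the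
orthogonality identity `∑_{j=k}^n p^{(n)}_{n-j} A^{(j)}_{j-k} = 1`, so a bound
`v_j ≤ ∑_{k≤j} A^{(j)}_{j-k} g_k` for all `j` transfers to `∑_j p^{(n)}_{n-j} v_j ≤ ∑_k g_k`.
For `m = 0`, `ω_{1-α}(t_j) ≤ π_a A^{(j)}_{j-1}` because `ω_{1-α}(t_j - ·)` increases on the
first cell. For `m = 1`, write `1 = ∫_0^{t_j} ω_{1-α}(t_j - s) ω_α(s) ds` (a Beta integral), split
it over the cells and apply Chebyshev's integral inequality on each cell, where
`ω_{1-α}(t_j - ·)` increases while `ω_α` decreases; this gives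
`1 ≤ π_a ∑_k A^{(j)}_{j-k} (ω_{1+α}(t_k) - ω_{1+α}(t_{k-1}))`, and the `k`-sum telescopes.
-/

open Finset

lemma sum_Icc_one_eq_sum_range {M : Type*} [AddCommMonoid M] (f : ℕ → M) (n : ℕ) :
    ∑ k ∈ Icc 1 n, f k = ∑ k ∈ range n, f (k + 1) := by
  rw [range_eq_Ico, sum_Ico_add' f, zero_add, Ico_add_one_right_eq_Icc]

lemma sum_Icc_one_sub_pred {M : Type*} [AddCommGroup M] (f : ℕ → M) (n : ℕ) :
    ∑ k ∈ Icc 1 n, (f k - f (k - 1)) = f n - f 0 := by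
  rw [sum_Icc_one_eq_sum_range]
  exact sum_range_sub f n

section ComplementaryKernels

variable (A : ℕ → ℕ → ℝ) (n : ℕ)

lemma compP_succ (m : ℕ) :
    compP A n (m + 1) = 1 / A (n - (m + 1)) (n - (m + 1)) *
      ∑ k ∈ Icc (n - (m + 1) + 1) n,
        (A k (n - (m + 1) + 1) - A k (n - (m + 1))) * compP A n (n - k) := by
  rw [compP, ← sum_attach (Icc _ n)]

theorem sum_compP_mul_eq_one {k : ℕ} (hk : k ≤ n) (hA : ∀ j ∈ Icc k n, A j j ≠ 0) :
    ∑ j ∈ Icc k n, compP A n (n - j) * A j k = 1 := by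
  induction hk using Nat.decreasingInduction with
  | self => simp [compP, hA n (by simp)]
  | of_succ k hkn ih =>
    obtain ⟨m, hm⟩ : ∃ m, n - k = m + 1 := ⟨n - k - 1, by omega⟩
    have hk : n - (m + 1) = k := by omega
    have hkk : A k k ≠ 0 := hA k (by simp [hkn.le])
    rw [← Finset.insert_Icc_succ_left_eq_Icc hkn.le, sum_insert (by simp), Order.succ_eq_add_one,
      hm, compP_succ, hk, mul_comm, ← mul_assoc, mul_one_div_cancel hkk, one_mul,
      ← sum_add_distrib, ← ih fun j hj => hA j (Icc_subset_Icc_left k.le_succ hj)]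
    exact sum_congr rfl fun j _ => by ring

theorem compP_nonneg (hdiag : ∀ j ∈ Icc 1 n, 0 < A j j)
    (hmono : ∀ k ∈ Icc 1 n, ∀ j ∈ Ico 1 k, A k j ≤ A k (j + 1)) {m : ℕ} (hm : m < n) :
    0 ≤ compP A n m := by
  induction m using Nat.strong_induction_on with
  | _ m ih =>
    cases m with
    | zero =>
      rw [compP]
      exact div_nonneg zero_le_one (hdiag n (mem_Icc.2 ⟨hm, le_rfl⟩)).le
    | succ m =>
      rw [compP_succ]
      refine mul_nonneg (div_nonneg zero_le_one (hdiag _ (mem_Icc.2 ⟨by omega, by omega⟩)).le)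
        (sum_nonneg fun k hk => ?_)
      simp only [mem_Icc] at hk
      exact mul_nonneg
        (sub_nonneg.2 (hmono k (mem_Icc.2 ⟨by omega, hk.2⟩) _ (mem_Ico.2 ⟨by omega, by omega⟩)))
        (ih _ (by omega) (by omega))

theorem sum_compP_mul_le_sum (v g : ℕ → ℝ) (hp : ∀ j ∈ Icc 1 n, 0 ≤ compP A n (n - j))
    (hA : ∀ j ∈ Icc 1 n, A j j ≠ 0) (hv : ∀ j ∈ Icc 1 n, v j ≤ ∑ k ∈ Icc 1 j, A j k * g k) :
    ∑ j ∈ Icc 1 n, compP A n (n - j) * v j ≤ ∑ k ∈ Icc 1 n, g k :=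
  calc ∑ j ∈ Icc 1 n, compP A n (n - j) * v j
      ≤ ∑ j ∈ Icc 1 n, ∑ k ∈ Icc 1 j, compP A n (n - j) * A j k * g k := by
        refine sum_le_sum fun j hj => ?_
        simp_rw [mul_assoc, ← mul_sum]
        exact mul_le_mul_of_nonneg_left (hv j hj) (hp j hj)
    _ = ∑ k ∈ Icc 1 n, (∑ j ∈ Icc k n, compP A n (n - j) * A j k) * g k := by
        simp_rw [sum_mul]
        exact sum_comm' fun j k => by simp only [mem_Icc]; omega
    _ = ∑ k ∈ Icc 1 n, g k := by
        refine sum_congr rfl fun k hk => ?_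
        rw [sum_compP_mul_eq_one A n (mem_Icc.1 hk).2 fun j hj => hA j ?_, one_mul]
        simp only [mem_Icc] at hk hj ⊢
        omega

end ComplementaryKernels

theorem AntivaryOn.measureReal_mul_setIntegral_mul_le {ι : Type*} [MeasurableSpace ι]
    {μ : Measure ι} [SFinite μ] {s : Set ι} {f g : ι → ℝ} (h : AntivaryOn f g s)
    (hs : MeasurableSet s) (hμs : μ s ≠ ⊤) (hf : IntegrableOn f s μ) (hg : IntegrableOn g s μ)
    (hfg : IntegrableOn (fun x => f x * g x) s μ) :
    μ.real s * ∫ x in s, f x * g x ∂μ ≤ (∫ x in s, f x ∂μ) * ∫ x in s, g x ∂μ := by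
  set ν := μ.restrict s
  have : IsFiniteMeasure ν := isFiniteMeasure_restrict.2 hμs
  have h1 : Integrable (fun z : ι × ι => f z.1 * g z.2) (ν.prod ν) := hf.mul_prod hg
  have h2 : Integrable (fun z : ι × ι => g z.1 * f z.2) (ν.prod ν) := hg.mul_prod hf
  have h3 : Integrable (fun z : ι × ι => f z.1 * g z.1 * 1) (ν.prod ν) :=
    hfg.mul_prod (integrable_const 1)
  have h4 : Integrable (fun z : ι × ι => 1 * (f z.2 * g z.2)) (ν.prod ν) :=
    (integrable_const 1).mul_prod hfg
  -- Chebyshev's trick: integrate `(f x - f y) * (g x - g y) ≤ 0` over `s × s`.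
  have hnonneg : 0 ≤ ∫ z, (f z.1 * g z.2 + g z.1 * f z.2
      - (f z.1 * g z.1 * 1 + 1 * (f z.2 * g z.2))) ∂(ν.prod ν) := by
    refine integral_nonneg_of_ae ?_
    rw [Measure.prod_restrict]
    filter_upwards [ae_restrict_mem (hs.prod hs)] with z ⟨hz1, hz2⟩
    have := h.sub_mul_sub_nonpos hz1 hz2
    simp only [Pi.zero_apply]
    nlinarith
  have h12 : Integrable (fun z : ι × ι => f z.1 * g z.2 + g z.1 * f z.2) (ν.prod ν) := h1.add h2
  have h34 : Integrable (fun z : ι × ι => f z.1 * g z.1 * 1 + 1 * (f z.2 * g z.2)) (ν.prod ν) :=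
    h3.add h4
  rw [integral_sub h12 h34, integral_add h1 h2, integral_add h3 h4,
    integral_prod_mul f g, integral_prod_mul g f,
    integral_prod_mul (fun x => f x * g x) (fun _ => (1 : ℝ)),
    integral_prod_mul (fun _ => (1 : ℝ)) (fun x => f x * g x), integral_const, smul_eq_mul,
    mul_one, measureReal_restrict_apply_univ] at hnonneg
  linarith

section Omega

variable {μ ν : ℝ}

lemma omega_one (s : ℝ) : omega 1 s = 1 := by
  simp [omega]

lemma omega_zero (hμ : 1 < μ) : omega μ 0 = 0 := by
  rw [omega, zero_rpow (by linarith), zero_div]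

lemma omega_pos (hμ : 0 < μ) {s : ℝ} (hs : 0 < s) : 0 < omega μ s :=
  div_pos (rpow_pos_of_pos hs _) (Gamma_pos_of_pos hμ)

lemma omega_antitoneOn (hμ : 0 < μ) (hμ1 : μ ≤ 1) : AntitoneOn (omega μ) (Set.Ioi 0) :=
  fun _ hu _ _ huv => div_le_div_of_nonneg_right
    (rpow_le_rpow_of_nonpos hu huv (by linarith)) (Gamma_pos_of_pos hμ).le

lemma omega_monotoneOn (hμ : 1 ≤ μ) : MonotoneOn (omega μ) (Set.Ici 0) :=
  fun _ hu _ _ huv => div_le_div_of_nonneg_right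
    (rpow_le_rpow hu huv (by linarith)) (Gamma_pos_of_pos (by linarith)).le

lemma intervalIntegrable_omega (hμ : 0 < μ) (a b : ℝ) :
    IntervalIntegrable (omega μ) volume a b :=
  (intervalIntegral.intervalIntegrable_rpow' (by linarith)).div_const _

lemma intervalIntegrable_omega_sub (hμ : 0 < μ) (x a b : ℝ) :
    IntervalIntegrable (fun s => omega μ (x - s)) volume a b := by
  simpa using (intervalIntegrable_omega hμ (x - a) (x - b)).comp_sub_left x

lemma integral_omega (hμ : 0 < μ) (a b : ℝ) :
    ∫ s in a..b, omega μ s = omega (1 + μ) b - omega (1 + μ) a := by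
  simp only [omega, intervalIntegral.integral_div,
    integral_rpow (Or.inl (by linarith : -1 < μ - 1)), sub_add_cancel, add_sub_cancel_right,
    add_comm 1 μ, Gamma_add_one hμ.ne']
  field_simp

lemma integral_rpow_mul_sub_rpow (hμ : 0 < μ) (hν : 0 < ν) {x : ℝ} (hx : 0 < x) :
    ∫ s in 0..x, s ^ (ν - 1) * (x - s) ^ (μ - 1) =
      Gamma ν * Gamma μ / Gamma (ν + μ) * x ^ (ν + μ - 1) := by
  apply Complex.ofReal_injective
  have hB := Complex.Gamma_mul_Gamma_eq_betaIntegral (s := ν) (t := μ) (by simpa) (by simpa)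
  have hΓ : Complex.Gamma (ν + μ) ≠ 0 := by
    rw [← Complex.ofReal_add, Complex.Gamma_ofReal]
    exact_mod_cast (Gamma_pos_of_pos (add_pos hν hμ)).ne'
  have hB' : Complex.betaIntegral ν μ = ((Gamma ν * Gamma μ / Gamma (ν + μ) : ℝ) : ℂ) := by
    push_cast [← Complex.Gamma_ofReal]
    rw [hB, mul_div_cancel_left₀ _ hΓ]
  rw [← intervalIntegral.integral_ofReal, intervalIntegral.integral_congr
    (g := fun s : ℝ => (s : ℂ) ^ ((ν : ℂ) - 1) * ((x : ℂ) - s) ^ ((μ : ℂ) - 1)),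
    Complex.betaIntegral_scaled _ _ hx, hB', Complex.ofReal_mul, Complex.ofReal_cpow hx.le,
    mul_comm]
  · push_cast
    rfl
  · intro s hs
    rw [Set.uIcc_of_le hx.le] at hs
    simp only [Complex.ofReal_mul, Complex.ofReal_cpow hs.1,
      Complex.ofReal_cpow (sub_nonneg.2 hs.2)]
    push_cast
    rfl

lemma integral_omega_sub_mul_omega (hμ : 0 < μ) (hν : 0 < ν) {x : ℝ} (hx : 0 < x) :
    ∫ s in 0..x, omega μ (x - s) * omega ν s = omega (μ + ν) x := by
  have hΓμ := (Gamma_pos_of_pos hμ).ne'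
  have hΓν := (Gamma_pos_of_pos hν).ne'
  simp only [omega, div_mul_div_comm, mul_comm ((x - _) ^ (μ - 1)),
    intervalIntegral.integral_div, integral_rpow_mul_sub_rpow hμ hν hx, add_comm ν μ]
  field_simp

lemma intervalIntegrable_omega_sub_mul_omega (hμ : 0 < μ) (hν : 0 < ν) {x : ℝ} (hx : 0 < x) :
    IntervalIntegrable (fun s => omega μ (x - s) * omega ν s) volume 0 x :=
  intervalIntegral.intervalIntegrable_of_integral_ne_zero <| by
    rw [integral_omega_sub_mul_omega hμ hν hx]
    exact (omega_pos (add_pos hμ hν) hx).ne'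

end Omega

section CellEstimates

variable {μ ν a b x : ℝ}

lemma omega_sub_le_average (hμ : 0 < μ) (hμ1 : μ ≤ 1) (hab : a < b) (hbx : b ≤ x) :
    omega μ (x - a) ≤ 1 / (b - a) * ∫ s in a..b, omega μ (x - s) := by
  have hmono : ∫ _ in a..b, omega μ (x - a) ≤ ∫ s in a..b, omega μ (x - s) :=
    intervalIntegral.integral_mono_on_of_le_Ioo hab.le intervalIntegrable_const
      (intervalIntegrable_omega_sub hμ x a b) fun s hs =>
        omega_antitoneOn hμ hμ1 (sub_pos.2 (hs.2.trans_le hbx)) (sub_pos.2 (hab.trans_le hbx))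
          (by linarith [hs.1])
  rw [intervalIntegral.integral_const, smul_eq_mul] at hmono
  rw [one_div, le_inv_mul_iff₀ (sub_pos.2 hab)]
  exact hmono

lemma integral_omega_sub_mul_omega_le (hμ : 0 < μ) (hμ1 : μ ≤ 1) (hν : 0 < ν) (hν1 : ν ≤ 1)
    (ha : 0 ≤ a) (hab : a < b) (hbx : b ≤ x) :
    ∫ s in a..b, omega μ (x - s) * omega ν s ≤
      (1 / (b - a) * ∫ s in a..b, omega μ (x - s)) * (omega (1 + ν) b - omega (1 + ν) a) := by
  have hanti : AntivaryOn (fun s => omega μ (x - s)) (omega ν) (Set.Ioo a b) :=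
    MonotoneOn.antivaryOn
      (fun u hu v hv huv => omega_antitoneOn hμ hμ1 (sub_pos.2 (hv.2.trans_le hbx))
        (sub_pos.2 (hu.2.trans_le hbx)) (by linarith))
      ((omega_antitoneOn hν hν1).mono fun s hs => ha.trans_lt hs.1)
  have hIoo := fun {f : ℝ → ℝ} (hf : IntervalIntegrable f volume a b) =>
    (intervalIntegrable_iff_integrableOn_Ioo_of_le hab.le).mp hf
  have hcheb := hanti.measureReal_mul_setIntegral_mul_le measurableSet_Ioo measure_Ioo_lt_top.ne
    (hIoo (intervalIntegrable_omega_sub hμ x a b)) (hIoo (intervalIntegrable_omega hν a b))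
    (hIoo ((intervalIntegrable_omega_sub_mul_omega hμ hν (by linarith)).mono_set (by
      rw [Set.uIcc_of_le hab.le, Set.uIcc_of_le (by linarith)]
      exact Set.Icc_subset_Icc ha hbx)))
  simp only [← integral_Ioc_eq_integral_Ioo, ← intervalIntegral.integral_of_le hab.le,
    volume_real_Ioo_of_le hab.le, integral_omega hν] at hcheb
  rw [mul_assoc, one_div, le_inv_mul_iff₀ (sub_pos.2 hab)]
  exact hcheb

end CellEstimates

lemma mesh_cell_bounds {N : ℕ} {t : ℕ → ℝ} (ht0 : t 0 = 0)
    (hmesh : ∀ k, k < N → t k < t (k + 1)) {j k : ℕ} (hk : 1 ≤ k) (hkj : k ≤ j) (hjN : j ≤ N) :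
    0 ≤ t (k - 1) ∧ t (k - 1) < t k ∧ t k ≤ t j := by
  have hmono : StrictMonoOn t (Set.Iic N) := strictMonoOn_Iic_of_lt_succ (by simpa using hmesh)
  have hmem : ∀ i ≤ N, i ∈ Set.Iic N := fun _ hi => hi
  refine ⟨ht0 ▸ hmono.monotoneOn (hmem 0 N.zero_le) (hmem _ (by omega)) (Nat.zero_le _),
    hmono (hmem _ (by omega)) (hmem _ (by omega)) (by omega),
    hmono.monotoneOn (hmem _ (by omega)) (hmem _ hjN) hkj⟩

section KernelLowerBound

variable {α πa : ℝ} {N : ℕ} {t : ℕ → ℝ} {A : ℕ → ℕ → ℝ}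

lemma omega_le_kernel_one_mul (hα0 : 0 < α) (hα1 : α < 1) (ht0 : t 0 = 0)
    (hmesh : ∀ k, k < N → t k < t (k + 1)) (hπa : 0 < πa)
    (hAlow : ∀ n k, 1 ≤ k → k ≤ n → n ≤ N → (1 / πa) * L1kernel α t n k ≤ A n k)
    {j : ℕ} (hj1 : 1 ≤ j) (hjN : j ≤ N) :
    omega (1 - α) (t j) ≤ A j 1 * πa := by
  obtain ⟨-, h01, h1j⟩ := mesh_cell_bounds ht0 hmesh le_rfl hj1 hjN
  have hL := hAlow j 1 le_rfl hj1 hjN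
  rw [one_div, inv_mul_le_iff₀ hπa, mul_comm] at hL
  calc omega (1 - α) (t j) = omega (1 - α) (t j - t 0) := by rw [ht0, sub_zero]
    _ ≤ L1kernel α t j 1 := omega_sub_le_average (by linarith) (by linarith) h01 h1j
    _ ≤ A j 1 * πa := hL

lemma one_le_sum_kernel_mul_omega_increment (hα0 : 0 < α) (hα1 : α < 1) (ht0 : t 0 = 0)
    (hmesh : ∀ k, k < N → t k < t (k + 1)) (hπa : 0 < πa)
    (hAlow : ∀ n k, 1 ≤ k → k ≤ n → n ≤ N → (1 / πa) * L1kernel α t n k ≤ A n k)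
    {j : ℕ} (hj1 : 1 ≤ j) (hjN : j ≤ N) :
    1 ≤ ∑ k ∈ Icc 1 j, A j k * (πa * (omega (1 + α) (t k) - omega (1 + α) (t (k - 1)))) := by
  have htj : 0 < t j := by
    obtain ⟨h0, h1, h2⟩ := mesh_cell_bounds ht0 hmesh hj1 le_rfl hjN
    linarith
  have hconv := intervalIntegrable_omega_sub_mul_omega (μ := 1 - α) (by linarith) hα0 htj
  calc (1 : ℝ) = ∫ s in t 0..t j, omega (1 - α) (t j - s) * omega α s := by
        rw [ht0, integral_omega_sub_mul_omega (by linarith) hα0 htj, sub_add_cancel, omega_one]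
    _ = ∑ k ∈ Icc 1 j, ∫ s in t (k - 1)..t k, omega (1 - α) (t j - s) * omega α s := by
        rw [sum_Icc_one_eq_sum_range]
        simp only [add_tsub_cancel_right]
        refine (intervalIntegral.sum_integral_adjacent_intervals fun k hk => ?_).symm
        obtain ⟨h0, hlt, hle⟩ := mesh_cell_bounds ht0 hmesh (Nat.le_add_left 1 k) hk hjN
        rw [add_tsub_cancel_right] at h0 hlt
        refine hconv.mono_set ?_
        rw [Set.uIcc_of_le hlt.le, Set.uIcc_of_le htj.le]
        exact Set.Icc_subset_Icc h0 hle
    _ ≤ _ := sum_le_sum fun k hk => by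
        obtain ⟨h0, hlt, hle⟩ :=
          mesh_cell_bounds ht0 hmesh (mem_Icc.1 hk).1 (mem_Icc.1 hk).2 hjN
        have hL := hAlow j k (mem_Icc.1 hk).1 (mem_Icc.1 hk).2 hjN
        rw [one_div, inv_mul_le_iff₀ hπa, mul_comm] at hL
        have hG : 0 ≤ omega (1 + α) (t k) - omega (1 + α) (t (k - 1)) :=
          sub_nonneg.2 (omega_monotoneOn (by linarith) h0 (h0.trans hlt.le) hlt.le)
        calc ∫ s in t (k - 1)..t k, omega (1 - α) (t j - s) * omega α s
            ≤ L1kernel α t j k * (omega (1 + α) (t k) - omega (1 + α) (t (k - 1))) :=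
              integral_omega_sub_mul_omega_le (by linarith) (by linarith) hα0 hα1.le h0 hlt hle
          _ ≤ A j k * πa * (omega (1 + α) (t k) - omega (1 + α) (t (k - 1))) :=
              mul_le_mul_of_nonneg_right hL hG
          _ = _ := mul_assoc _ _ _

end KernelLowerBound

theorem complementary_kernels_weighted_bound_general
    (α : ℝ) (hα0 : 0 < α) (hα1 : α < 1)
    (N : ℕ)
    (t : ℕ → ℝ) (ht0 : t 0 = 0)
    (hmesh : ∀ k, k < N → t k < t (k + 1))
    (A : ℕ → ℕ → ℝ)
    (hApos : ∀ n k, 1 ≤ k → k ≤ n → n ≤ N → 0 < A n k)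
    (hAmono : ∀ n k, 1 ≤ k → k + 1 ≤ n → n ≤ N → A n k ≤ A n (k + 1))
    (πa : ℝ) (hπa : 0 < πa)
    -- lower bound (Ass1): `A^{(n)}_{n−k} ≥ (1/π_a)(1/τ_k)∫_{t_{k−1}}^{t_k} ω_{1−α}(t_n−s) ds`
    (hAlow : ∀ n k, 1 ≤ k → k ≤ n → n ≤ N →
      (1 / πa) * L1kernel α t n k ≤ A n k) :
    ∀ m : ℕ, m ≤ 1 → ∀ n, 1 ≤ n → n ≤ N →
      ∑ j ∈ Finset.Icc 1 n,
          compP A n (n - j) * omega (1 + m * α - α) (t j) ≤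
        πa * omega (1 + m * α) (t n) := by
  intro m hm n hn hnN
  have hjN : ∀ j ∈ Icc 1 n, 1 ≤ j ∧ j ≤ N := fun j hj =>
    ⟨(mem_Icc.1 hj).1, (mem_Icc.1 hj).2.trans hnN⟩
  have hdiag : ∀ j ∈ Icc 1 n, 0 < A j j := fun j hj => hApos j j (hjN j hj).1 le_rfl (hjN j hj).2
  have hp : ∀ j ∈ Icc 1 n, 0 ≤ compP A n (n - j) := fun j hj =>
    compP_nonneg A n hdiag (fun k hk i hi => hAmono k i (mem_Ico.1 hi).1 (mem_Ico.1 hi).2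
      (hjN k hk).2) (by simp only [mem_Icc] at hj; omega)
  have hA : ∀ j ∈ Icc 1 n, A j j ≠ 0 := fun j hj => (hdiag j hj).ne'
  interval_cases m
  · simpa [omega_one, hn] using sum_compP_mul_le_sum A n _ (fun k => if k = 1 then πa else 0) hp hA
      fun j hj => by
        simpa [(hjN j hj).1] using
          omega_le_kernel_one_mul hα0 hα1 ht0 hmesh hπa hAlow (hjN j hj).1 (hjN j hj).2
  · have := sum_compP_mul_le_sum A n _ _ hp hA fun j hj =>
      (omega_one (t j)).trans_le <|
        one_le_sum_kernel_mul_omega_increment hα0 hα1 ht0 hmesh hπa hAlow (hjN j hj).1 (hjN j hj).2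
    rw [← mul_sum, sum_Icc_one_sub_pred, ht0, omega_zero (by linarith), sub_zero] at this
    simpa using this

theorem complementary_kernels_weighted_bound
    (α T : ℝ) (hα0 : 0 < α) (hα1 : α < 1)
    (N : ℕ) (hN : 1 ≤ N)
    (t : ℕ → ℝ) (ht0 : t 0 = 0) (htN : t N = T)
    (hmesh : ∀ k, k < N → t k < t (k + 1))
    (A : ℕ → ℕ → ℝ)
    (hApos : ∀ n k, 1 ≤ k → k ≤ n → n ≤ N → 0 < A n k)
    (hAmono : ∀ n k, 1 ≤ k → k + 1 ≤ n → n ≤ N → A n k ≤ A n (k + 1))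
    (πa : ℝ) (hπa : 0 < πa)
    -- lower bound (Ass1): `A^{(n)}_{n−k} ≥ (1/π_a)(1/τ_k)∫_{t_{k−1}}^{t_k} ω_{1−α}(t_n−s) ds`
    (hAlow : ∀ n k, 1 ≤ k → k ≤ n → n ≤ N →
      (1 / πa) * L1kernel α t n k ≤ A n k) :
    ∀ m : ℕ, m ≤ 1 → ∀ n, 1 ≤ n → n ≤ N →
      ∑ j ∈ Finset.Icc 1 n,
          compP A n (n - j) * omega (1 + m * α - α) (t j) ≤
        πa * omega (1 + m * α) (t n) :=
  complementary_kernels_weighted_bound_general α hα0 hα1 N t ht0 hmesh A hApos hAmono πa hπa hAlow
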